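/- Let E be an editable space. Then W = L_1(ℝ, E), with pointwise monoid operation and metric d_{L_1}(f,g) = ∫_ℝ d_e(f(x), g(x)) dx, is again an editable space; that is, it satisfies: (P1) d_{L_1} is a metric; (P2) (W, ∗, 0) is a monoid with neutral element the constant-0 function; (P3) d_{L_1}(0, f ∗ g) = d_{L_1}(0, f) + d_{L_1}(0, g); (P4) d_{L_1}(f, g) = d_{L_1}(h ∗ f, h ∗ g) = d_{L_1}(f ∗ h, g ∗ h) for all f, g, h ∈ W. -/
import Mathlib


open MeasureTheory

/-- An editable space: a metric space which is also a monoid (written additively), such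
that `d(0,·)` is a monoid morphism to `(ℝ,+)` and the distance is invariant under left
and right translation. -/
class EditableSpace (E : Type*) extends MetricSpace E, AddMonoid E where
  dist_zero_add' : ∀ x y : E, dist (0 : E) (x + y) = dist 0 x + dist 0 y
  dist_add_left' : ∀ x y z : E, dist (z + x) (z + y) = dist x y
  dist_add_right' : ∀ x y z : E, dist (x + z) (y + z) = dist x y

/-- Membership in `L_1(ℝ, E)`: measurable functions with `∫ d_e(f(x), 0) dx < ∞`. -/
def MemL1 (E : Type*) [EditableSpace E] [MeasurableSpace E] (f : ℝ → E) : Prop :=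
  Measurable f ∧ Integrable (fun x => dist (f x) (0 : E))

/-- The `L_1` distance `d_{L_1}(f,g) = ∫ d_e(f(x), g(x)) dx`. -/
noncomputable def dL1 (E : Type*) [EditableSpace E] (f g : ℝ → E) : ℝ :=
  ∫ x, dist (f x) (g x)


section Aux
variable {E : Type*} [EditableSpace E]

lemma EditableSpace.continuous_add :
    Continuous fun p : E × E => p.1 + p.2 := by
  rw [Metric.continuous_iff]
  intro p ε hε
  refine ⟨ε / 2, by positivity, fun q hq => ?_⟩
  have h1 : dist q.1 p.1 < ε / 2 := lt_of_le_of_lt (le_max_left _ _) (by rwa [Prod.dist_eq] at hq)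
  have h2 : dist q.2 p.2 < ε / 2 := lt_of_le_of_lt (le_max_right _ _) (by rwa [Prod.dist_eq] at hq)
  calc dist (q.1 + q.2) (p.1 + p.2)
      ≤ dist (q.1 + q.2) (q.1 + p.2) + dist (q.1 + p.2) (p.1 + p.2) := dist_triangle _ _ _
    _ = dist q.2 p.2 + dist q.1 p.1 := by
        rw [EditableSpace.dist_add_left', EditableSpace.dist_add_right']
    _ < ε := by linarith

variable [MeasurableSpace E] [BorelSpace E] [SecondCountableTopology E]

lemma MemL1.integrable_dist {f g : ℝ → E} (hf : MemL1 E f) (hg : MemL1 E g) :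
    Integrable (fun x => dist (f x) (g x)) := by
  refine (hf.2.add hg.2).mono' ((hf.1.dist hg.1).aestronglyMeasurable) ?_
  filter_upwards with x
  rw [Real.norm_eq_abs, abs_of_nonneg dist_nonneg]
  calc dist (f x) (g x) ≤ dist (f x) 0 + dist 0 (g x) := dist_triangle _ _ _
    _ = dist (f x) 0 + dist (g x) 0 := by rw [dist_comm (0 : E)]

lemma MemL1.add {f g : ℝ → E} (hf : MemL1 E f) (hg : MemL1 E g) : MemL1 E (f + g) := by
  have hm : Measurable (f + g) :=
    (EditableSpace.continuous_add.measurable).comp (hf.1.prodMk hg.1)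
  refine ⟨hm, (hf.2.add hg.2).mono' ((hm.dist measurable_const).aestronglyMeasurable) ?_⟩
  filter_upwards with x
  rw [Real.norm_eq_abs, abs_of_nonneg dist_nonneg]
  calc dist (f x + g x) 0 ≤ dist (f x + g x) (f x + 0) + dist (f x + 0) 0 := dist_triangle _ _ _
    _ = dist (g x) 0 + dist (f x) 0 := by
        rw [EditableSpace.dist_add_left', add_zero]
    _ = dist (f x) 0 + dist (g x) 0 := add_comm _ _

end Aux

/-- if `E` is an editable space then `W = L_1(ℝ, E)` (with pointwise
operation and the metric `d_{L_1}`, functions being identified when a.e. equal) is again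
an editable space:
(P2) `W` is a monoid, closed under the pointwise operation, with neutral element `0`;
(P1) `d_{L_1}` is a pseudometric which separates points up to a.e. equality (hence a
metric on the quotient);
(P3) `d_{L_1}(0, f + g) = d_{L_1}(0, f) + d_{L_1}(0, g)`;
(P4) `d_{L_1}` is translation invariant on both sides. -/

theorem l1_editable (E : Type*) [EditableSpace E] [MeasurableSpace E] [BorelSpace E]
    [SecondCountableTopology E] :
    (MemL1 E 0 ∧ ∀ f g : ℝ → E, MemL1 E f → MemL1 E g → MemL1 E (f + g)) ∧
    ((∀ f : ℝ → E, MemL1 E f → dL1 E f f = 0) ∧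
     (∀ f g : ℝ → E, MemL1 E f → MemL1 E g → dL1 E f g = dL1 E g f) ∧
     (∀ f g h : ℝ → E, MemL1 E f → MemL1 E g → MemL1 E h →
        dL1 E f h ≤ dL1 E f g + dL1 E g h) ∧
     (∀ f g : ℝ → E, MemL1 E f → MemL1 E g →
        (dL1 E f g = 0 ↔ f =ᵐ[volume] g))) ∧
    (∀ f g : ℝ → E, MemL1 E f → MemL1 E g →
      dL1 E 0 (f + g) = dL1 E 0 f + dL1 E 0 g) ∧
    (∀ f g h : ℝ → E, MemL1 E f → MemL1 E g → MemL1 E h →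
      dL1 E (h + f) (h + g) = dL1 E f g ∧ dL1 E (f + h) (g + h) = dL1 E f g) := by
  obtain P3 := @EditableSpace.dist_zero_add' E _
  obtain P4l := @EditableSpace.dist_add_left' E _
  obtain P4r := @EditableSpace.dist_add_right' E _
  have hz : MemL1 E (0 : ℝ → E) :=
    ⟨measurable_const, by simp⟩
  refine ⟨⟨hz,
    fun f g hf hg => hf.add hg⟩, ⟨?_, ?_, ?_, ?_⟩, ?_, ?_⟩
  · intro f hf; simp [dL1]
  · intro f g hf hg; unfold dL1; simp_rw [dist_comm]
  · intro f g h hf hg hh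
    unfold dL1
    rw [← integral_add (hf.integrable_dist hg) (hg.integrable_dist hh)]
    exact integral_mono (hf.integrable_dist hh)
      ((hf.integrable_dist hg).add (hg.integrable_dist hh))
      (fun x => dist_triangle _ _ _)
  · intro f g hf hg
    unfold dL1
    rw [integral_eq_zero_iff_of_nonneg (fun x => dist_nonneg) (hf.integrable_dist hg)]
    constructor
    · intro h; filter_upwards [h] with x hx
      exact dist_eq_zero.mp (by simpa using hx)
    · intro h; filter_upwards [h] with x hx
      simp [hx]
  · intro f g hf hg
    unfold dL1
    simp only [Pi.add_apply, Pi.zero_apply, P3]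
    exact integral_add (by simpa [dist_comm] using hf.integrable_dist hz)
      (by simpa [dist_comm] using hg.integrable_dist hz)
  · intro f g h hf hg hh
    constructor <;> (unfold dL1; congr 1; funext x; simp [P4l, P4r])
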